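/- arXiv:1310.8381 — 2 statements merged into one kernel-verified Lean document; each statement's English description precedes it below -/
import Mathlib

section
/- Define a partial order on labels by ℓ(v) ≺ ℓ(u) iff the rank sequence of ℓ(v) followed by +∞ is lexicographically greater than that of ℓ(u) followed by +∞. If ℓ(u) ≺ ℓ(v) (strictly), then there is no directed path from v to u in the DAG. -/
open Classical Finset
open scoped Classical

noncomputable section

variable {V : Type*}

/-- Reachability: `reach adj u v` iff there is a directed path from `u` to `v`
(including the trivial path, so `reach adj v v` always holds). -/
def reach (adj : V → V → Prop) : V → V → Prop := Relation.ReflTransGen adj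

/-- The graph has no (nontrivial) directed cycle. -/
def IsAcyclic (adj : V → V → Prop) : Prop := ∀ x, ¬ Relation.TransGen adj x x

/-- `P(v)`: the set of predecessors of `v` (vertices with a path to `v`, including `v`). -/
def predSet [Fintype V] (adj : V → V → Prop) (v : V) : Finset V :=
  Finset.univ.filter fun u => reach adj u v

/-- `S(v)`: the set of successors of `v` (vertices reachable from `v`, including `v`). -/
def succSet [Fintype V] (adj : V → V → Prop) (v : V) : Finset V :=
  Finset.univ.filter fun u => reach adj v u

/-- The element of `A` of minimum rank (an arbitrary vertex if `A = ∅`). -/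
def argminR [Nonempty V] (r : V → ℕ∞) (A : Finset V) : V :=
  if h : A.Nonempty then (Finset.exists_min_image A r h).choose else Classical.arbitrary V

/-- The sets `A_{i+1}(v)` (0-indexed: `Aset adj L r v i` is the paper's `A_{i+1}(v)`):
`A_1(v) = P(v) ∩ L`, and `A_{i+1}(v) = (S(ℓ_i(v)) ∩ P(v) ∩ L) \ {ℓ_i(v)}` where
`ℓ_i(v)` is the minimum-rank element of `A_i(v)`. -/
def Aset [Fintype V] [Nonempty V] (adj : V → V → Prop) (L : Finset V) (r : V → ℕ∞)
    (v : V) : ℕ → Finset V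
  | 0 => predSet adj v ∩ L
  | i + 1 =>
    if (Aset adj L r v i).Nonempty then
      (succSet adj (argminR r (Aset adj L r v i)) ∩ predSet adj v ∩ L).erase
        (argminR r (Aset adj L r v i))
    else ∅

/-- `ℓ_{i+1}(v)` (0-indexed). -/
def labVertex [Fintype V] [Nonempty V] (adj : V → V → Prop) (L : Finset V) (r : V → ℕ∞)
    (v : V) (i : ℕ) : V := argminR r (Aset adj L r v i)

/-- `k(v)`: the number of indices `i` with `A_{i+1}(v) ≠ ∅` (in a DAG the sets shrink,
so this is the largest `i` with `A_i(v) ≠ ∅`, in the paper's 1-indexed convention). -/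
def kOf [Fintype V] [Nonempty V] (adj : V → V → Prop) (L : Finset V) (r : V → ℕ∞) (v : V) : ℕ :=
  ((Finset.range (Fintype.card V + 1)).filter fun i => (Aset adj L r v i).Nonempty).card

/-- The label `ℓ(v) = (ℓ_1(v), …, ℓ_{k(v)}(v))`. -/
def labelSeq [Fintype V] [Nonempty V] (adj : V → V → Prop) (L : Finset V) (r : V → ℕ∞)
    (v : V) : List V :=
  (List.range (kOf adj L r v)).map (labVertex adj L r v)

/-- The rank sequence `r(ℓ(v))` with `+∞` appended. -/
def rankSeq [Fintype V] [Nonempty V] (adj : V → V → Prop) (L : Finset V) (r : V → ℕ∞)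
    (v : V) : List ℕ∞ :=
  ((labelSeq adj L r v).map r) ++ [⊤]

/-- `ℓ(u) ≺ ℓ(v)`: decreasing lexicographic order on the rank sequences with `+∞` appended. -/
def labLt [Fintype V] [Nonempty V] (adj : V → V → Prop) (L : Finset V) (r : V → ℕ∞)
    (u v : V) : Prop :=
  List.Lex (· < ·) (rankSeq adj L r v) (rankSeq adj L r u)


/-! If `v` reaches `u` then `P(v) ⊆ P(u)`. As long as the labels of `v` and `u` agree, this
inclusion propagates to `A_i(v) ⊆ A_i(u)`, so the minimum rank over `A_i(u)` is at most the one
over `A_i(v)`. At the first index where the labels differ, injectivity of `r` makes this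
inequality strict; if instead `ℓ(v)` stops first, `v` contributes `+∞` there while `u` still has a
finite rank or stops as well. Either way `r(ℓ(u)) ++ [∞] ≤ r(ℓ(v)) ++ [∞]` lexicographically,
which is incompatible with `ℓ(u) ≺ ℓ(v)`. -/

theorem IsAcyclic.reach_antisymm {adj : V → V → Prop} (hacyc : IsAcyclic adj) {a b : V}
    (hab : reach adj a b) (hba : reach adj b a) : a = b := by
  rcases Relation.reflTransGen_iff_eq_or_transGen.1 hab with hba' | hab'
  · exact hba'.symm
  · exact (hacyc a (hab'.trans_left hba)).elim

theorem mem_predSet [Fintype V] {adj : V → V → Prop} {w v : V} :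
    w ∈ predSet adj v ↔ reach adj w v := by
  simp [predSet]

theorem mem_succSet [Fintype V] {adj : V → V → Prop} {w v : V} :
    w ∈ succSet adj v ↔ reach adj v w := by
  simp [succSet]

section argminR

variable [Nonempty V] {r : V → ℕ∞} {A : Finset V}

theorem argminR_mem (h : A.Nonempty) : argminR r A ∈ A := by
  rw [argminR, dif_pos h]
  exact (A.exists_min_image r h).choose_spec.1

theorem argminR_le {b : V} (hb : b ∈ A) : r (argminR r A) ≤ r b := by
  rw [argminR, dif_pos ⟨b, hb⟩]
  exact (A.exists_min_image r ⟨b, hb⟩).choose_spec.2 b hb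

end argminR

section Aset

variable [Fintype V] [Nonempty V] {adj : V → V → Prop} {L : Finset V} {r : V → ℕ∞} {v : V}
  {i : ℕ}

theorem Aset_succ_of_nonempty (h : (Aset adj L r v i).Nonempty) :
    Aset adj L r v (i + 1) =
      (succSet adj (labVertex adj L r v i) ∩ predSet adj v ∩ L).erase (labVertex adj L r v i) := by
  rw [Aset, if_pos h, labVertex]

theorem Aset_succ_eq_empty (h : ¬ (Aset adj L r v i).Nonempty) :
    Aset adj L r v (i + 1) = ∅ := by
  rw [Aset, if_neg h]

theorem Aset_subset_predSet_inter : ∀ i, Aset adj L r v i ⊆ predSet adj v ∩ L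
  | 0 => subset_rfl
  | i + 1 => by
    by_cases h : (Aset adj L r v i).Nonempty
    · rw [Aset_succ_of_nonempty h, inter_assoc]
      exact (erase_subset _ _).trans inter_subset_right
    · simp [Aset_succ_eq_empty h]

theorem labVertex_mem_L (h : (Aset adj L r v i).Nonempty) : labVertex adj L r v i ∈ L :=
  (mem_inter.1 (Aset_subset_predSet_inter i (argminR_mem h))).2

theorem labVertex_notMem_Aset_succ : labVertex adj L r v i ∉ Aset adj L r v (i + 1) := by
  by_cases h : (Aset adj L r v i).Nonempty
  · simp [Aset_succ_of_nonempty h]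
  · simp [Aset_succ_eq_empty h]

theorem Aset_nonempty_of_succ (h : (Aset adj L r v (i + 1)).Nonempty) :
    (Aset adj L r v i).Nonempty := by
  by_contra h0
  simp [Aset_succ_eq_empty h0] at h

theorem Aset_nonempty_of_le {j : ℕ} (hij : i ≤ j) (h : (Aset adj L r v j).Nonempty) :
    (Aset adj L r v i).Nonempty :=
  antitone_nat_of_succ_le (f := fun i => (Aset adj L r v i).Nonempty)
    (fun _ => Aset_nonempty_of_succ) hij h

theorem Aset_succ_subset (hacyc : IsAcyclic adj) : Aset adj L r v (i + 1) ⊆ Aset adj L r v i := by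
  cases i with
  | zero => exact Aset_subset_predSet_inter 1
  | succ i =>
    by_cases h1 : (Aset adj L r v (i + 1)).Nonempty
    · have h0 := Aset_nonempty_of_succ h1
      have hℓ := argminR_mem (r := r) h1
      rw [← labVertex, Aset_succ_of_nonempty h0] at hℓ
      rw [Aset_succ_of_nonempty h1, Aset_succ_of_nonempty h0]
      intro w hw
      simp only [mem_erase, mem_inter, mem_succSet] at hℓ hw ⊢
      obtain ⟨hℓne, ⟨hℓ₀ℓ, -⟩, -⟩ := hℓ
      obtain ⟨-, ⟨hℓw, hwv⟩, hwL⟩ := hw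
      exact ⟨fun hw₀ => hℓne (hacyc.reach_antisymm (hw₀ ▸ hℓw) hℓ₀ℓ), ⟨hℓ₀ℓ.trans hℓw, hwv⟩, hwL⟩
    · simp [Aset_succ_eq_empty h1]

theorem card_Aset_add_le (hacyc : IsAcyclic adj) :
    ∀ {i}, (Aset adj L r v i).Nonempty → (Aset adj L r v i).card + i ≤ Fintype.card V
  | 0, _ => card_le_univ _
  | i + 1, h => by
    have h0 := Aset_nonempty_of_succ h
    have hlt : (Aset adj L r v (i + 1)).card < (Aset adj L r v i).card :=
      card_lt_card <| (ssubset_iff_of_subset (Aset_succ_subset hacyc)).2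
        ⟨_, argminR_mem h0, labVertex_notMem_Aset_succ⟩
    have := card_Aset_add_le hacyc h0
    omega

theorem lt_card_of_Aset_nonempty (hacyc : IsAcyclic adj) (h : (Aset adj L r v i).Nonempty) :
    i < Fintype.card V := by
  have := card_Aset_add_le hacyc h
  have := h.card_pos
  omega

theorem Aset_nonempty_iff_lt_kOf (hacyc : IsAcyclic adj) :
    (Aset adj L r v i).Nonempty ↔ i < kOf adj L r v := by
  constructor
  · intro h
    have hsub : range (i + 1) ⊆
        (range (Fintype.card V + 1)).filter fun j => (Aset adj L r v j).Nonempty := by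
      intro j hj
      have hji : j ≤ i := Nat.lt_succ_iff.1 (mem_range.1 hj)
      have := lt_card_of_Aset_nonempty hacyc h
      exact mem_filter.2 ⟨mem_range.2 (by omega), Aset_nonempty_of_le hji h⟩
    simpa [kOf] using card_le_card hsub
  · intro hi
    by_contra h
    have hsub : ((range (Fintype.card V + 1)).filter fun j => (Aset adj L r v j).Nonempty) ⊆
        range i := by
      intro j hj
      exact mem_range.2 (not_le.1 fun hij => h (Aset_nonempty_of_le hij (mem_filter.1 hj).2))
    exact absurd hi (not_lt.2 (by simpa [kOf] using card_le_card hsub))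

theorem Aset_subset_Aset_of_reach {u : V} (hvu : reach adj v u) :
    ∀ {i}, (∀ j < i, labVertex adj L r v j = labVertex adj L r u j) →
      Aset adj L r v i ⊆ Aset adj L r u i
  | 0, _ => inter_subset_inter
      (fun w hw => mem_predSet.2 ((mem_predSet.1 hw).trans hvu)) subset_rfl
  | i + 1, hagree => by
    by_cases h : (Aset adj L r v i).Nonempty
    · have hsub := Aset_subset_Aset_of_reach hvu fun j hj => hagree j (Nat.lt_succ_of_lt hj)
      rw [Aset_succ_of_nonempty h, Aset_succ_of_nonempty (h.mono hsub), hagree i i.lt_succ_self]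
      refine erase_subset_erase _ (inter_subset_inter (inter_subset_inter subset_rfl ?_) subset_rfl)
      exact fun w hw => mem_predSet.2 ((mem_predSet.1 hw).trans hvu)
    · simp [Aset_succ_eq_empty h]

theorem rank_labVertex_lt_of_ne {u : V} (hinj : Set.InjOn r L)
    (hsub : Aset adj L r v i ⊆ Aset adj L r u i) (h : (Aset adj L r v i).Nonempty)
    (hne : labVertex adj L r v i ≠ labVertex adj L r u i) :
    r (labVertex adj L r u i) < r (labVertex adj L r v i) :=
  (argminR_le (hsub (argminR_mem h))).lt_of_ne fun heq =>
    hne (hinj (labVertex_mem_L h) (labVertex_mem_L (h.mono hsub)) heq.symm)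

end Aset

section rankSeq

variable [Fintype V] [Nonempty V] {adj : V → V → Prop} {L : Finset V} {r : V → ℕ∞} {w : V}
  {i : ℕ}

theorem rankSeq_eq_of_kOf_eq (h : kOf adj L r w = i) :
    rankSeq adj L r w = (List.range i).map (r ∘ labVertex adj L r w) ++ [⊤] := by
  rw [rankSeq, labelSeq, List.map_map, h]

theorem rankSeq_eq_of_lt_kOf (h : i < kOf adj L r w) :
    ∃ t, rankSeq adj L r w =
      (List.range i).map (r ∘ labVertex adj L r w) ++ r (labVertex adj L r w i) :: t := by
  obtain ⟨m, hm⟩ := Nat.exists_eq_add_of_le h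
  refine ⟨(List.range m).map (r ∘ labVertex adj L r w ∘ (i + 1 + ·)) ++ [⊤], ?_⟩
  rw [rankSeq_eq_of_kOf_eq hm, List.range_add, List.range_succ]
  simp

theorem rankSeq_le_of_reach (hacyc : IsAcyclic adj) (hfin : ∀ w ∈ L, r w ≠ ⊤)
    (hinj : Set.InjOn r L) {u v : V} (hvu : reach adj v u) :
    rankSeq adj L r u ≤ rankSeq adj L r v := by
  set kv := kOf adj L r v
  set ku := kOf adj L r u
  have hex : ∃ i, ¬ (i < kv ∧ i < ku ∧ labVertex adj L r v i = labVertex adj L r u i) :=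
    ⟨kv, fun h => h.1.false⟩
  set i := Nat.find hex
  have hfirst := Nat.find_spec hex
  have hagree : ∀ j < i, labVertex adj L r v j = labVertex adj L r u j :=
    fun j hj => (not_not.1 (Nat.find_min hex hj)).2.2
  have hiv : i ≤ kv := Nat.find_min' hex fun h => h.1.false
  have hiu : i ≤ ku := Nat.find_min' hex fun h => h.2.1.false
  have hprefix : (List.range i).map (r ∘ labVertex adj L r u) =
      (List.range i).map (r ∘ labVertex adj L r v) :=
    List.map_congr_left fun j hj => congrArg r (hagree j (List.mem_range.1 hj)).symm
  have hsub := Aset_subset_Aset_of_reach hvu hagree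
  rcases hiv.lt_or_eq with hltv | heqv
  · have hnv := (Aset_nonempty_iff_lt_kOf hacyc).2 hltv
    have hltu := (Aset_nonempty_iff_lt_kOf hacyc).1 (hnv.mono hsub)
    have hrank := rank_labVertex_lt_of_ne hinj hsub hnv fun h => hfirst ⟨hltv, hltu, h⟩
    obtain ⟨s, hs⟩ := rankSeq_eq_of_lt_kOf hltu
    obtain ⟨t, ht⟩ := rankSeq_eq_of_lt_kOf hltv
    rw [hs, ht, hprefix]
    exact le_of_lt (List.append_left_lt (List.cons_lt_cons_iff.2 (Or.inl hrank)))
  rcases hiu.lt_or_eq with hltu | hequ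
  · have hfin_u : r (labVertex adj L r u i) < ⊤ := (hfin _ (labVertex_mem_L
      ((Aset_nonempty_iff_lt_kOf hacyc).2 hltu))).lt_top
    obtain ⟨s, hs⟩ := rankSeq_eq_of_lt_kOf hltu
    rw [hs, rankSeq_eq_of_kOf_eq heqv.symm, hprefix]
    exact le_of_lt (List.append_left_lt (List.cons_lt_cons_iff.2 (Or.inl hfin_u)))
  · rw [rankSeq_eq_of_kOf_eq hequ.symm, rankSeq_eq_of_kOf_eq heqv.symm, hprefix]

end rankSeq

theorem no_path_of_label_lt_general [Fintype V] [Nonempty V]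
    (adj : V → V → Prop) (hacyc : IsAcyclic adj)
    (L : Finset V) (r : V → ℕ∞)
    (hfin : ∀ w ∈ L, r w ≠ ⊤) (hinj : Set.InjOn r L)
    (u v : V) (h : labLt adj L r u v) :
    ¬ reach adj v u := fun hvu =>
  (rankSeq_le_of_reach hacyc hfin hinj hvu).not_gt h

/-- Theorem 1 of the paper: if `ℓ(u) ≺ ℓ(v)` then there is no
directed path from `v` to `u`. -/
theorem no_path_of_label_lt [Fintype V] [Nonempty V]
    (adj : V → V → Prop) (hacyc : IsAcyclic adj)
    (L : Finset V) (r : V → ℕ∞)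
    (hfin : ∀ w ∈ L, r w ≠ ⊤) (hpos : ∀ w ∈ L, 0 < r w)
    (hinf : ∀ w ∉ L, r w = ⊤) (hinj : Set.InjOn r L)
    (u v : V) (h : labLt adj L r u v) :
    ¬ reach adj v u :=
  no_path_of_label_lt_general adj hacyc L r hfin hinj u v h
end
end

section
/- For c ≥ e and λ ≥ 3, if k = ⌈c·ln λ⌉ then (ln λ)^{k−1}/(λ·k!) ≤ λ^{−1−c(ln c − 1)}. -/
/-!
Since `n ^ n / n!` is one term of the series of `exp n`, we have `n! ≥ (n / e) ^ n`. With
`L = log λ ≥ 1` and `k = ⌈c L⌉ ≥ c L` this gives `L ^ (k - 1) ≤ L ^ k ≤ (k / c) ^ k ≤ (e / c) ^ k k!`,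
and as `e / c ≤ 1`, `(e / c) ^ k ≤ (e / c) ^ (c L) = λ ^ (c (1 - log c))`.
-/

open Real
open scoped Nat

lemma pow_div_exp_one_le_factorial (n : ℕ) : ((n : ℝ) / exp 1) ^ n ≤ n ! := by
  have hn : (0 : ℝ) ≤ n := n.cast_nonneg
  have h := pow_div_factorial_le_exp (n : ℝ) hn n
  rw [div_le_iff₀ (by positivity), ← exp_one_pow] at h
  rwa [div_pow, div_le_iff₀ (by positivity), mul_comm]

lemma pow_le_div_pow_mul_factorial {c x : ℝ} {k : ℕ} (hc : 0 < c) (hx : 0 ≤ x)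
    (hk : c * x ≤ k) : x ^ k ≤ (exp 1 / c) ^ k * k ! := calc
  x ^ k ≤ ((k : ℝ) / c) ^ k := by
    gcongr
    rwa [le_div_iff₀ hc, mul_comm]
  _ = (exp 1 / c) ^ k * ((k : ℝ) / exp 1) ^ k := by
    rw [← mul_pow]
    field_simp
  _ ≤ (exp 1 / c) ^ k * k ! := by
    gcongr
    exact pow_div_exp_one_le_factorial k

lemma rpow_mul_log_comm {a b : ℝ} (ha : 0 < a) (hb : 0 < b) (y : ℝ) :
    a ^ (y * log b) = b ^ (y * log a) := by
  rw [rpow_def_of_pos ha, rpow_def_of_pos hb]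
  ring_nf

/-- for `c ≥ e` and `λ ≥ 3`, with `k = ⌈c·ln λ⌉`,
`(ln λ)^(k−1) / (λ·k!) ≤ λ^(−1−c(ln c − 1))`. -/
theorem label_tail_arithmetic (c lam : ℝ) (hc : Real.exp 1 ≤ c) (hlam : 3 ≤ lam) :
    (Real.log lam) ^ (⌈c * Real.log lam⌉₊ - 1) /
        (lam * (Nat.factorial ⌈c * Real.log lam⌉₊ : ℝ)) ≤
      lam ^ (-1 - c * (Real.log c - 1)) := by
  have hc0 : 0 < c := (exp_pos 1).trans_le hc
  have hlam0 : 0 < lam := by linarith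
  set L := log lam
  have hL : 1 ≤ L := by
    rw [le_log_iff_exp_le hlam0]
    linarith [exp_one_lt_d9]
  set k := ⌈c * L⌉₊
  have hk : c * L ≤ k := Nat.le_ceil _
  have hratio : exp 1 / c ≤ 1 := (div_le_one hc0).mpr hc
  calc L ^ (k - 1) / (lam * k !) ≤ L ^ k / (lam * k !) := by
        gcongr
        exact k.sub_le 1
    _ ≤ (exp 1 / c) ^ k * k ! / (lam * k !) := by
        gcongr
        exact pow_le_div_pow_mul_factorial hc0 (by linarith) hk
    _ = (exp 1 / c) ^ (k : ℝ) / lam := by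
        rw [rpow_natCast]
        field_simp
    _ ≤ (exp 1 / c) ^ (c * L) / lam := by
        gcongr ?_ / _
        exact rpow_le_rpow_of_exponent_ge (by positivity) hratio hk
    _ = lam ^ (-1 - c * (log c - 1)) := by
        rw [rpow_mul_log_comm (by positivity) hlam0, log_div (exp_pos 1).ne' hc0.ne', log_exp,
          div_eq_mul_inv, ← rpow_neg_one, ← rpow_add hlam0]
        ring_nf
end
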